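/- arXiv:math/0509321 — 2 statements merged into one kernel-verified Lean document; each statement's English description precedes it below -/
import Mathlib

section
/- Let 1 ≤ p < ∞ and f ∈ Lᵖ(ℝᵈ). Define the p-Grammian f_{b,p}(ω) = (|det b| ∑_{s ∈ ℤᵈ} |f(b(ω+s))|^p)^{1/p} for b ∈ GL_d(ℝ). Then f_{b,p} converges to the constant function ‖f‖_p in Lᵖ([0,1]ᵈ) as ‖b‖ → 0. -/
open MeasureTheory Filter
noncomputable section

/-- The p-Grammian of `f` with respect to the matrix `b`. -/
def pgram {d : ℕ} (p : ℝ) (b : Matrix (Fin d) (Fin d) ℝ) (f : (Fin d → ℝ) → ℂ)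
    (ω : Fin d → ℝ) : ℝ :=
  (|b.det| * ∑' s : Fin d → ℤ, ‖f (b.mulVec (ω + fun i => (s i : ℝ)))‖ ^ p) ^ (1 / p)

/-- The filter of invertible matrices whose operator norm tends to `0`. -/
def smallGL (d : ℕ) : Filter (Matrix (Fin d) (Fin d) ℝ) :=
  (Filter.comap (fun b : Matrix (Fin d) (Fin d) ℝ =>
      ‖LinearMap.toContinuousLinearMap (Matrix.toLin' b)‖) (nhds 0)) ⊓
    Filter.principal {b | IsUnit b}

/-!
Put `φ = |f|ᵖ` and `periodize b φ ω = |det b| ∑ₛ φ(b(ω + s))`, so that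
`f_{b,p} = (periodize b φ)^{1/p}`.
Tiling `ℝᵈ` by the integer translates of `[0,1]ᵈ` and substituting `x = b y` gives
`∫_{[0,1]ᵈ} periodize b φ = ∫ φ`; hence `φ ↦ periodize b φ` is a contraction from `L¹(ℝᵈ)` to
`L¹([0,1]ᵈ)`. For continuous compactly supported `φ`, `periodize b φ ω` is a Riemann sum of `∫ φ`
over the cells `b(s + [0,1]ᵈ)` of diameter `O(‖b‖)`, so it converges to `∫ φ` in `L¹([0,1]ᵈ)`;
by density the same holds for every integrable `φ`. Finally `|a^{1/p} - c^{1/p}|ᵖ ≤ |a - c|` for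
`p ≥ 1` turns this into `Lᵖ`-convergence of `f_{b,p}` to `(∫ φ)^{1/p} = ‖f‖_p`.
-/

open Set Topology
open scoped ENNReal Matrix

namespace Grammian

def absDiff (a c : ℝ≥0∞) : ℝ≥0∞ := (a - c) + (c - a)

section absDiff

lemma absDiff_comm (a c : ℝ≥0∞) : absDiff a c = absDiff c a := add_comm _ _

lemma absDiff_of_le {a c : ℝ≥0∞} (h : c ≤ a) : absDiff a c = a - c := by
  rw [absDiff, tsub_eq_zero_of_le h, add_zero]

lemma absDiff_triangle (a c e : ℝ≥0∞) : absDiff a e ≤ absDiff a c + absDiff c e :=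
  calc (a - e) + (e - a) ≤ (a - c + (c - e)) + (e - c + (c - a)) :=
        add_le_add tsub_le_tsub_add_tsub tsub_le_tsub_add_tsub
    _ = absDiff a c + absDiff c e := by unfold absDiff; ring

lemma absDiff_mul_left {k : ℝ≥0∞} (hk : k ≠ ⊤) (a c : ℝ≥0∞) :
    absDiff (k * a) (k * c) = k * absDiff a c := by
  rw [absDiff, absDiff, mul_add, ENNReal.mul_sub fun _ _ => hk, ENNReal.mul_sub fun _ _ => hk]

lemma absDiff_tsum_le {ι : Type*} (f g : ι → ℝ≥0∞) :
    absDiff (∑' i, f i) (∑' i, g i) ≤ ∑' i, absDiff (f i) (g i) := by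
  have tsum_sub_le : ∀ f g : ι → ℝ≥0∞, ∑' i, f i - ∑' i, g i ≤ ∑' i, (f i - g i) := by
    intro f g
    rw [tsub_le_iff_right, ← ENNReal.tsum_add]
    exact ENNReal.tsum_le_tsum fun i => le_tsub_add
  unfold absDiff
  rw [ENNReal.tsum_add]
  exact add_le_add (tsum_sub_le f g) (tsum_sub_le g f)

lemma absDiff_ofReal_le (a c : ℝ) : absDiff (ENNReal.ofReal a) (ENNReal.ofReal c) ≤ ‖a - c‖ₑ := by
  wlog h : c ≤ a generalizing a c
  · rw [absDiff_comm, ← enorm_neg, neg_sub]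
    exact this c a (le_of_not_ge h)
  rw [absDiff_of_le (ENNReal.ofReal_le_ofReal h), Real.enorm_eq_ofReal_abs]
  rw [tsub_le_iff_right]
  calc ENNReal.ofReal a ≤ ENNReal.ofReal (|a - c| + c) :=
        ENNReal.ofReal_le_ofReal (by linarith [le_abs_self (a - c)])
    _ ≤ ENNReal.ofReal |a - c| + ENNReal.ofReal c := ENNReal.ofReal_add_le

lemma enorm_toReal_sub_le_absDiff (a c : ℝ≥0∞) : ‖a.toReal - c.toReal‖ₑ ≤ absDiff a c := by
  wlog h : c ≤ a generalizing a c
  · rw [absDiff_comm, ← enorm_neg, neg_sub]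
    exact this c a (le_of_not_ge h)
  rw [absDiff_of_le h]
  rcases eq_or_ne a ⊤ with rfl | ha
  · rcases eq_or_ne c ⊤ with rfl | hc
    · simp
    · simp [hc]
  rw [← ENNReal.toReal_sub_of_le h ha, Real.enorm_of_nonneg ENNReal.toReal_nonneg]
  exact ENNReal.ofReal_toReal_le

lemma absDiff_rpow_le {q : ℝ} (hq0 : 0 ≤ q) (hq1 : q ≤ 1) (a c : ℝ≥0∞) :
    absDiff (a ^ q) (c ^ q) ≤ absDiff a c ^ q := by
  wlog h : c ≤ a generalizing a c
  · rw [absDiff_comm, absDiff_comm a]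
    exact this c a (le_of_not_ge h)
  rw [absDiff_of_le h, absDiff_of_le (ENNReal.rpow_le_rpow h hq0), tsub_le_iff_right]
  calc a ^ q ≤ (a - c + c) ^ q := ENNReal.rpow_le_rpow le_tsub_add hq0
    _ ≤ (a - c) ^ q + c ^ q := ENNReal.rpow_add_le_add_rpow _ _ hq0 hq1

lemma enorm_toReal_rpow_sub_le_absDiff {p : ℝ} (hp : 1 ≤ p) (a c : ℝ≥0∞) :
    ‖a.toReal ^ (1 / p) - c.toReal ^ (1 / p)‖ₑ ^ p ≤ absDiff a c := by
  have hp0 : 0 < p := by linarith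
  rw [ENNReal.toReal_rpow, ENNReal.toReal_rpow]
  calc ‖(a ^ (1 / p)).toReal - (c ^ (1 / p)).toReal‖ₑ ^ p
      ≤ (absDiff a c ^ (1 / p)) ^ p := by
        gcongr
        exact (enorm_toReal_sub_le_absDiff _ _).trans
          (absDiff_rpow_le (by positivity) (by rw [div_le_one hp0]; exact hp) a c)
    _ = absDiff a c := by rw [← ENNReal.rpow_mul, one_div_mul_cancel hp0.ne', ENNReal.rpow_one]

variable {α : Type*} [MeasurableSpace α] {μ : Measure α} {f g : α → ℝ≥0∞}

lemma _root_.AEMeasurable.absDiff (hf : AEMeasurable f μ) (hg : AEMeasurable g μ) :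
    AEMeasurable (fun x => absDiff (f x) (g x)) μ :=
  (hf.sub hg).add (hg.sub hf)

lemma absDiff_lintegral_le (hf : AEMeasurable f μ) (hg : AEMeasurable g μ) :
    absDiff (∫⁻ x, f x ∂μ) (∫⁻ x, g x ∂μ) ≤ ∫⁻ x, absDiff (f x) (g x) ∂μ := by
  unfold absDiff
  rw [lintegral_add_left' (f := fun x => f x - g x) (hf.sub hg)]
  exact add_le_add (lintegral_sub_le' g f hg) (lintegral_sub_le' f g hf)

end absDiff

section tiling

variable {ι : Type*} [Fintype ι]

lemma lintegral_eq_tsum_setLIntegral_Icc (ψ : (ι → ℝ) → ℝ≥0∞) :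
    ∫⁻ x, ψ x = ∑' s : ι → ℤ, ∫⁻ ω in Icc 0 1, ψ (ω + fun i => (s i : ℝ)) := by
  classical
  have hfd := ZSpan.isAddFundamentalDomain' (Pi.basisFun ℝ ι) volume
  rw [ZSpan.fundamentalDomain_pi_basisFun] at hfd
  let e := ((Pi.basisFun ℝ ι).restrictScalars ℤ).equivFun
  have he : ∀ s, (e.symm s : ι → ℝ) = fun i => (s i : ℝ) := fun s => by
    ext i
    simp [e, Module.Basis.equivFun_symm_apply, Finset.sum_apply, Pi.single_apply]
  have : Countable (Submodule.span ℤ (range (Pi.basisFun ℝ ι))) := e.injective.countable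
  have hIcc : (univ.pi fun _ => Ico (0 : ℝ) 1) =ᵐ[volume] Icc (0 : ι → ℝ) 1 :=
    Measure.univ_pi_Ico_ae_eq_Icc
  rw [hfd.lintegral_eq_tsum'']
  refine (e.symm.toEquiv.tsum_eq fun g =>
    ∫⁻ x in univ.pi fun _ => Ico (0 : ℝ) 1, ψ ((g : ι → ℝ) + x)).symm.trans
      (tsum_congr fun s => ?_)
  simp only [LinearEquiv.coe_toEquiv, he, Measure.restrict_congr_set hIcc, add_comm]

lemma setLIntegral_Icc_tsum_comp_add_intCast {ψ : (ι → ℝ) → ℝ≥0∞} (hψ : AEMeasurable ψ) :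
    ∫⁻ ω in Icc 0 1, ∑' s : ι → ℤ, ψ (ω + fun i => (s i : ℝ)) = ∫⁻ x, ψ x := by
  rw [lintegral_tsum fun s => ?_, lintegral_eq_tsum_setLIntegral_Icc]
  exact (hψ.comp_quasiMeasurePreserving
    (measurePreserving_add_right volume _).quasiMeasurePreserving).restrict

lemma volume_Icc_zero_one : volume (Icc (0 : ι → ℝ) 1) = 1 := by
  rw [Real.volume_Icc_pi]; simp

lemma dist_le_one_of_mem_Icc {x y : ι → ℝ} (hx : x ∈ Icc 0 1) (hy : y ∈ Icc 0 1) : dist x y ≤ 1 :=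
  (Real.dist_le_of_mem_pi_Icc hx hy).trans <| by
    rw [dist_zero_left]
    exact (pi_norm_le_iff_of_nonneg zero_le_one).2 fun _ => by simp

end tiling

section periodize

variable {ι : Type*} [Fintype ι] [DecidableEq ι] {b : Matrix ι ι ℝ}

lemma quasiMeasurePreserving_mulVec (hb : b.det ≠ 0) :
    Measure.QuasiMeasurePreserving (b *ᵥ ·) volume volume :=
  Measure.LinearMap.quasiMeasurePreserving volume (Matrix.toLin' b) (by rwa [LinearMap.det_toLin'])

lemma quasiMeasurePreserving_mulVec_add (hb : b.det ≠ 0) (v : ι → ℝ) :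
    Measure.QuasiMeasurePreserving (fun x => b *ᵥ (x + v)) volume volume :=
  (quasiMeasurePreserving_mulVec hb).comp
    (measurePreserving_add_right volume v).quasiMeasurePreserving

lemma lintegral_comp_mulVec (hb : b.det ≠ 0) {φ : (ι → ℝ) → ℝ≥0∞} (hφ : AEMeasurable φ) :
    ∫⁻ x, φ (b *ᵥ x) = (ENNReal.ofReal |b.det|)⁻¹ * ∫⁻ x, φ x := by
  have hmap := Real.map_matrix_volume_pi_eq_smul_volume_pi hb
  calc ∫⁻ x, φ (b *ᵥ x) = ∫⁻ y, φ y ∂(Measure.map (Matrix.toLin' b) volume) :=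
        (lintegral_map' (hmap ▸ hφ.smul_measure _)
          (quasiMeasurePreserving_mulVec hb).aemeasurable).symm
    _ = (ENNReal.ofReal |b.det|)⁻¹ * ∫⁻ x, φ x := by
        rw [hmap, lintegral_smul_measure, abs_inv, ENNReal.ofReal_inv_of_pos (abs_pos.2 hb),
          smul_eq_mul]

def periodize (b : Matrix ι ι ℝ) (φ : (ι → ℝ) → ℝ≥0∞) (ω : ι → ℝ) : ℝ≥0∞ :=
  ENNReal.ofReal |b.det| * ∑' s : ι → ℤ, φ (b *ᵥ (ω + fun i => (s i : ℝ)))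

lemma aemeasurable_periodize (hb : b.det ≠ 0) {φ : (ι → ℝ) → ℝ≥0∞} (hφ : AEMeasurable φ) :
    AEMeasurable (periodize b φ) :=
  (AEMeasurable.tsum fun _ =>
    hφ.comp_quasiMeasurePreserving (quasiMeasurePreserving_mulVec_add hb _)).const_mul _

lemma setLIntegral_periodize (hb : b.det ≠ 0) {φ : (ι → ℝ) → ℝ≥0∞} (hφ : AEMeasurable φ) :
    ∫⁻ ω in Icc 0 1, periodize b φ ω = ∫⁻ x, φ x := by
  unfold periodize
  rw [lintegral_const_mul' _ _ ENNReal.ofReal_ne_top,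
    setLIntegral_Icc_tsum_comp_add_intCast (ψ := fun x => φ (b *ᵥ x))
      (hφ.comp_quasiMeasurePreserving (quasiMeasurePreserving_mulVec hb)),
    lintegral_comp_mulVec hb hφ, ← mul_assoc,
    ENNReal.mul_inv_cancel (by simpa using hb) ENNReal.ofReal_ne_top, one_mul]

lemma absDiff_periodize_le (φ ψ : (ι → ℝ) → ℝ≥0∞) (ω : ι → ℝ) :
    absDiff (periodize b φ ω) (periodize b ψ ω) ≤
      periodize b (fun x => absDiff (φ x) (ψ x)) ω := by
  unfold periodize
  rw [absDiff_mul_left ENNReal.ofReal_ne_top]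
  gcongr
  exact absDiff_tsum_le _ _

lemma setLIntegral_absDiff_periodize_le (hb : b.det ≠ 0) {φ ψ : (ι → ℝ) → ℝ≥0∞}
    (hφ : AEMeasurable φ) (hψ : AEMeasurable ψ) :
    ∫⁻ ω in Icc 0 1, absDiff (periodize b φ ω) (periodize b ψ ω) ≤ ∫⁻ x, absDiff (φ x) (ψ x) :=
  (lintegral_mono fun ω => absDiff_periodize_le φ ψ ω).trans_eq
    (setLIntegral_periodize hb (hφ.absDiff hψ))

lemma absDiff_periodize_lintegral_le (hb : b.det ≠ 0) {φ χ : (ι → ℝ) → ℝ≥0∞}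
    (hφ : AEMeasurable φ)
    (hosc : ∀ x y, dist x y ≤ 1 → absDiff (φ (b *ᵥ x)) (φ (b *ᵥ y)) ≤ χ (b *ᵥ x))
    {ω : ι → ℝ} (hω : ω ∈ Icc 0 1) :
    absDiff (periodize b φ ω) (∫⁻ x, φ x) ≤ periodize b χ ω := by
  have hφs : ∀ s : ι → ℤ, AEMeasurable (fun u => φ (b *ᵥ (u + fun i => (s i : ℝ))))
      (volume.restrict (Icc 0 1)) := fun _ =>
    (hφ.comp_quasiMeasurePreserving (quasiMeasurePreserving_mulVec_add hb _)).restrict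
  -- `∫ φ = |det b| ∑ₛ ∫_{[0,1]ᵈ} φ(b(u + s)) du`, compared term by term with `φ(b(ω + s))`
  rw [← setLIntegral_periodize hb hφ]
  unfold periodize
  rw [lintegral_const_mul' _ _ ENNReal.ofReal_ne_top, lintegral_tsum hφs,
    absDiff_mul_left ENNReal.ofReal_ne_top]
  gcongr
  refine (absDiff_tsum_le _ _).trans (ENNReal.tsum_le_tsum fun s => ?_)
  set v : ι → ℝ := fun i => (s i : ℝ)
  calc absDiff (φ (b *ᵥ (ω + v))) (∫⁻ u in Icc 0 1, φ (b *ᵥ (u + v)))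
      = absDiff (∫⁻ _ in Icc (0 : ι → ℝ) 1, φ (b *ᵥ (ω + v)))
          (∫⁻ u in Icc 0 1, φ (b *ᵥ (u + v))) := by
        rw [setLIntegral_const, volume_Icc_zero_one, mul_one]
    _ ≤ ∫⁻ u in Icc 0 1, absDiff (φ (b *ᵥ (ω + v))) (φ (b *ᵥ (u + v))) :=
        absDiff_lintegral_le aemeasurable_const (hφs s)
    _ ≤ ∫⁻ _ in Icc (0 : ι → ℝ) 1, χ (b *ᵥ (ω + v)) := by
        refine setLIntegral_mono' measurableSet_Icc fun u hu => hosc _ _ ?_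
        rw [dist_add_right]
        exact dist_le_one_of_mem_Icc hω hu
    _ = χ (b *ᵥ (ω + v)) := by rw [setLIntegral_const, volume_Icc_zero_one, mul_one]

lemma setLIntegral_absDiff_periodize_lintegral_le (hb : b.det ≠ 0) {φ χ : (ι → ℝ) → ℝ≥0∞}
    (hφ : AEMeasurable φ) (hχ : AEMeasurable χ)
    (hosc : ∀ x y, dist x y ≤ 1 → absDiff (φ (b *ᵥ x)) (φ (b *ᵥ y)) ≤ χ (b *ᵥ x)) :
    ∫⁻ ω in Icc 0 1, absDiff (periodize b φ ω) (∫⁻ x, φ x) ≤ ∫⁻ x, χ x :=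
  (setLIntegral_mono' measurableSet_Icc fun _ hω =>
    absDiff_periodize_lintegral_le hb hφ hosc hω).trans_eq (setLIntegral_periodize hb hχ)

end periodize

lemma absDiff_ofReal_le_indicator_cthickening {E : Type*} [PseudoMetricSpace E] {g : E → ℝ}
    {x y : E} {ρ : ℝ} (hxy : dist x y ≤ 1) (hg : dist (g x) (g y) ≤ ρ) :
    absDiff (ENNReal.ofReal (g x)) (ENNReal.ofReal (g y)) ≤
      ENNReal.ofReal ρ * (Metric.cthickening 1 (tsupport g)).indicator 1 x := by
  by_cases hx : x ∈ Metric.cthickening 1 (tsupport g)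
  · rw [indicator_of_mem hx, Pi.one_apply, mul_one]
    refine (absDiff_ofReal_le _ _).trans ?_
    rw [Real.enorm_eq_ofReal_abs, ← Real.dist_eq]
    exact ENNReal.ofReal_le_ofReal hg
  · have hgx : g x = 0 :=
      image_eq_zero_of_notMem_tsupport fun h => hx (Metric.self_subset_cthickening _ h)
    have hgy : g y = 0 := image_eq_zero_of_notMem_tsupport fun h =>
      hx (Metric.mem_cthickening_of_dist_le x y 1 _ h hxy)
    simp [hgx, hgy, absDiff]

lemma exists_continuous_hasCompactSupport_lintegral_absDiff_le {α : Type*} [TopologicalSpace α]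
    [NormalSpace α] [R1Space α] [WeaklyLocallyCompactSpace α] [MeasurableSpace α] [BorelSpace α]
    {μ : Measure α} [μ.Regular] {φ : α → ℝ≥0∞} (hφ : AEMeasurable φ μ)
    (hφi : ∫⁻ x, φ x ∂μ ≠ ⊤) {ε : ℝ≥0∞} (hε : ε ≠ 0) :
    ∃ g : α → ℝ, Continuous g ∧ HasCompactSupport g ∧
      ∫⁻ x, absDiff (φ x) (ENNReal.ofReal (g x)) ∂μ ≤ ε := by
  have hφ1 : MemLp (fun x => (φ x).toReal) 1 μ :=
    memLp_one_iff_integrable.2 (integrable_toReal_of_lintegral_ne_top hφ hφi)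
  obtain ⟨g, hgc, hφg, hg, -⟩ := hφ1.exists_hasCompactSupport_eLpNorm_sub_le ENNReal.one_ne_top hε
  refine ⟨g, hg, hgc, le_trans ?_ hφg⟩
  rw [eLpNorm_one_eq_lintegral_enorm]
  refine lintegral_mono_ae ((ae_lt_top' hφ hφi).mono fun x hx => ?_)
  calc absDiff (φ x) (ENNReal.ofReal (g x))
      = absDiff (ENNReal.ofReal (φ x).toReal) (ENNReal.ofReal (g x)) := by
        rw [ENNReal.ofReal_toReal hx.ne]
    _ ≤ _ := absDiff_ofReal_le _ _

section smallGL

variable {d : ℕ}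

lemma eventually_det_ne_zero_and_dist_mulVec_le {δ : ℝ} (hδ : 0 < δ) :
    ∀ᶠ b in smallGL d, b.det ≠ 0 ∧
      ∀ x y : Fin d → ℝ, dist x y ≤ 1 → dist (b *ᵥ x) (b *ᵥ y) ≤ δ := by
  have hnorm : ∀ᶠ b in smallGL d, ‖LinearMap.toContinuousLinearMap (Matrix.toLin' b)‖ < δ :=
    (tendsto_comap.mono_left inf_le_left).eventually (eventually_lt_nhds hδ)
  have hunit : ∀ᶠ b in smallGL d, IsUnit b := mem_inf_of_right (mem_principal_self _)
  filter_upwards [hnorm, hunit] with b hbδ hbu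
  refine ⟨((Matrix.isUnit_iff_isUnit_det b).1 hbu).ne_zero, fun x y hxy => ?_⟩
  calc dist (b *ᵥ x) (b *ᵥ y)
      = ‖LinearMap.toContinuousLinearMap (Matrix.toLin' b) (x - y)‖ := by
        rw [dist_eq_norm, map_sub]; rfl
    _ ≤ ‖LinearMap.toContinuousLinearMap (Matrix.toLin' b)‖ * ‖x - y‖ :=
        ContinuousLinearMap.le_opNorm _ _
    _ ≤ δ * 1 := mul_le_mul hbδ.le (dist_eq_norm x y ▸ hxy) (norm_nonneg _) hδ.le
    _ = δ := mul_one δ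

lemma tendsto_setLIntegral_absDiff_periodize_of_hasCompactSupport {g : (Fin d → ℝ) → ℝ}
    (hg : Continuous g) (hgc : HasCompactSupport g) :
    Tendsto (fun b => ∫⁻ ω in Icc 0 1, absDiff (periodize b (fun x => ENNReal.ofReal (g x)) ω)
      (∫⁻ x, ENNReal.ofReal (g x))) (smallGL d) (𝓝 0) := by
  set K := Metric.cthickening 1 (tsupport g)
  have hKm : MeasurableSet K := Metric.isClosed_cthickening.measurableSet
  have hK : volume K ≠ ⊤ := hgc.cthickening.measure_lt_top.ne
  rw [ENNReal.tendsto_nhds_zero]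
  intro ε hε
  obtain ⟨ρ, hρ, hρK⟩ := ENNReal.exists_nnreal_pos_mul_lt hK hε.ne'
  obtain ⟨δ, hδ, hgδ⟩ :=
    Metric.uniformContinuous_iff.1 (hgc.uniformContinuous_of_continuous hg) ρ hρ
  filter_upwards [eventually_det_ne_zero_and_dist_mulVec_le (lt_min (half_pos hδ) one_pos)]
    with b ⟨hb, hbδ⟩
  have hosc : ∀ x y : Fin d → ℝ, dist x y ≤ 1 →
      absDiff (ENNReal.ofReal (g (b *ᵥ x))) (ENNReal.ofReal (g (b *ᵥ y))) ≤
        ENNReal.ofReal ρ * K.indicator 1 (b *ᵥ x) := fun x y hxy =>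
    absDiff_ofReal_le_indicator_cthickening ((hbδ x y hxy).trans (min_le_right _ _))
      (hgδ (((hbδ x y hxy).trans (min_le_left _ _)).trans_lt (half_lt_self hδ))).le
  calc _ ≤ ∫⁻ x, ENNReal.ofReal ρ * K.indicator 1 x :=
        setLIntegral_absDiff_periodize_lintegral_le hb hg.measurable.ennreal_ofReal.aemeasurable
          ((measurable_one.indicator hKm).const_mul _).aemeasurable hosc
    _ = ρ * volume K := by
        rw [lintegral_const_mul _ (measurable_one.indicator hKm), lintegral_indicator_one hKm,
          ENNReal.ofReal_coe_nnreal]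
    _ ≤ ε := hρK.le

theorem tendsto_setLIntegral_absDiff_periodize {φ : (Fin d → ℝ) → ℝ≥0∞} (hφ : AEMeasurable φ)
    (hφi : ∫⁻ x, φ x ≠ ⊤) :
    Tendsto (fun b => ∫⁻ ω in Icc 0 1, absDiff (periodize b φ ω) (∫⁻ x, φ x))
      (smallGL d) (𝓝 0) := by
  rw [ENNReal.tendsto_nhds_zero]
  intro ε hε
  have hε3 : ε / 3 ≠ 0 := (ENNReal.div_pos hε.ne' ENNReal.ofNat_ne_top).ne'
  obtain ⟨g, hg, hgc, hφg⟩ := exists_continuous_hasCompactSupport_lintegral_absDiff_le hφ hφi hε3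
  set h : (Fin d → ℝ) → ℝ≥0∞ := fun x => ENNReal.ofReal (g x)
  have hh : AEMeasurable h := hg.measurable.ennreal_ofReal.aemeasurable
  have hgb := ENNReal.tendsto_nhds_zero.1
    (tendsto_setLIntegral_absDiff_periodize_of_hasCompactSupport hg hgc) _ (pos_iff_ne_zero.2 hε3)
  filter_upwards [hgb, eventually_det_ne_zero_and_dist_mulVec_le one_pos] with b hbh hb
  calc ∫⁻ ω in Icc 0 1, absDiff (periodize b φ ω) (∫⁻ x, φ x)
      ≤ ∫⁻ ω in Icc 0 1, (absDiff (periodize b φ ω) (periodize b h ω) +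
          absDiff (periodize b h ω) (∫⁻ x, h x) + absDiff (∫⁻ x, h x) (∫⁻ x, φ x)) :=
        lintegral_mono fun ω => (absDiff_triangle _ (∫⁻ x, h x) _).trans
          (add_le_add (absDiff_triangle _ (periodize b h ω) _) le_rfl)
    _ = (∫⁻ ω in Icc 0 1, absDiff (periodize b φ ω) (periodize b h ω)) +
          (∫⁻ ω in Icc 0 1, absDiff (periodize b h ω) (∫⁻ x, h x)) +
          absDiff (∫⁻ x, h x) (∫⁻ x, φ x) := by
        rw [lintegral_add_right' _ aemeasurable_const,
          lintegral_add_left' ((aemeasurable_periodize hb.1 hφ).absDiff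
            (aemeasurable_periodize hb.1 hh)).restrict,
          setLIntegral_const, volume_Icc_zero_one, mul_one]
    _ ≤ ε / 3 + ε / 3 + ε / 3 := by
        gcongr
        · exact (setLIntegral_absDiff_periodize_le hb.1 hφ hh).trans hφg
        · rw [absDiff_comm]
          exact (absDiff_lintegral_le hφ hh).trans hφg
    _ = ε := ENNReal.add_thirds ε

end smallGL

lemma pgram_eq_toReal_periodize {d : ℕ} {p : ℝ} (hp : 0 ≤ p) (b : Matrix (Fin d) (Fin d) ℝ)
    (f : (Fin d → ℝ) → ℂ) (ω : Fin d → ℝ) :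
    pgram p b f ω = (periodize b (fun x => ‖f x‖ₑ ^ p) ω).toReal ^ (1 / p) := by
  -- unconditional: if the series diverges, both sides are `0`
  rw [pgram, periodize, ENNReal.toReal_mul, ENNReal.toReal_ofReal (abs_nonneg _),
    ENNReal.tsum_toReal_eq fun _ => ENNReal.rpow_ne_top_of_nonneg hp enorm_ne_top]
  simp [← ENNReal.toReal_rpow]

lemma eLpNorm_pgram_sub_le {d : ℕ} {p : ℝ} (hp : 1 ≤ p) (b : Matrix (Fin d) (Fin d) ℝ)
    (f : (Fin d → ℝ) → ℂ) (μ : Measure (Fin d → ℝ)) :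
    eLpNorm (fun ω => pgram p b f ω - (eLpNorm f (ENNReal.ofReal p) volume).toReal)
        (ENNReal.ofReal p) μ ≤
      (∫⁻ ω, absDiff (periodize b (fun x => ‖f x‖ₑ ^ p) ω) (∫⁻ x, ‖f x‖ₑ ^ p) ∂μ) ^ (1 / p) := by
  have hp0 : 0 < p := by linarith
  have hp' : ENNReal.ofReal p ≠ 0 := ENNReal.ofReal_ne_zero_iff.2 hp0
  rw [eLpNorm_eq_lintegral_rpow_enorm_toReal hp' ENNReal.ofReal_ne_top,
    ENNReal.toReal_ofReal hp0.le]
  gcongr with ω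
  rw [pgram_eq_toReal_periodize hp0.le,
    eLpNorm_eq_lintegral_rpow_enorm_toReal hp' ENNReal.ofReal_ne_top,
    ENNReal.toReal_ofReal hp0.le, ← ENNReal.toReal_rpow]
  exact enorm_toReal_rpow_sub_le_absDiff hp _ _

end Grammian

open Grammian

/-- For `f ∈ Lᵖ(ℝᵈ)`, the p-Grammian `f_{b,p}` converges to the constant `‖f‖_p`
in `Lᵖ([0,1]ᵈ)` as the operator norm of the invertible matrix `b` tends to `0`. -/
theorem pgram_tendsto_Lp {d : ℕ} (p : ℝ) (hp : 1 ≤ p) (f : (Fin d → ℝ) → ℂ)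
    (hf : MemLp f (ENNReal.ofReal p) (volume : Measure (Fin d → ℝ))) :
    Tendsto
      (fun b : Matrix (Fin d) (Fin d) ℝ =>
        eLpNorm
          (fun ω => pgram p b f ω -
            (eLpNorm f (ENNReal.ofReal p) (volume : Measure (Fin d → ℝ))).toReal)
          (ENNReal.ofReal p) (volume.restrict (Set.Icc (0 : Fin d → ℝ) 1)))
      (smallGL d) (nhds 0) := by
  have hp0 : 0 < p := by linarith
  have hφ : AEMeasurable (fun x => ‖f x‖ₑ ^ p) := hf.1.enorm.pow_const p
  have hφi : ∫⁻ x, ‖f x‖ₑ ^ p ≠ ⊤ := by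
    simpa [ENNReal.toReal_ofReal hp0.le] using (lintegral_rpow_enorm_lt_top_of_eLpNorm_lt_top
      (ENNReal.ofReal_ne_zero_iff.2 hp0) ENNReal.ofReal_ne_top hf.eLpNorm_lt_top).ne
  have hlim := (ENNReal.continuous_rpow_const (y := 1 / p)).tendsto 0 |>.comp
    (tendsto_setLIntegral_absDiff_periodize hφ hφi)
  rw [ENNReal.zero_rpow_of_pos (by positivity)] at hlim
  exact tendsto_of_tendsto_of_tendsto_of_le_of_le tendsto_const_nhds hlim (fun _ => zero_le)
    fun b => eLpNorm_pgram_sub_le hp b f _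
end
end

section
/- For any 1 ≤ p < ∞, any f, g ∈ Lᵖ(ℝᵈ), and any b ∈ GL_d(ℝ), the p-Grammians satisfy ‖f_{b,p} - g_{b,p}‖_{Lᵖ([0,1]ᵈ)} ≤ ‖f - g‖_{Lᵖ(ℝᵈ)}. -/
open MeasureTheory Filter
noncomputable section

/-!
For fixed `ω`, the Grammian `h_{b,p}(ω)` is the `ℓᵖ` norm of `s ↦ h(b(ω+s))` for the measure
`|det b| · count` on `ℤᵈ`, so Minkowski's inequality gives `|f_{b,p} - g_{b,p}| ≤ (f - g)_{b,p}`
wherever `f_{b,p}` and `g_{b,p}` are finite. On the other hand, when `h_{b,p}^p` is integrated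
over the unit cube, the integer translates of the cube tile `ℝᵈ` and the substitution `x ↦ b x`
absorbs the factor `|det b|`, so `‖h_{b,p}‖_{Lᵖ([0,1]ᵈ)} = ‖h‖_{Lᵖ(ℝᵈ)}`. This makes `f_{b,p}`
and `g_{b,p}` finite almost everywhere, and bounds the `Lᵖ` norm of `(f - g)_{b,p}` by
`‖f - g‖_p`.
-/

open Set Matrix
open scoped ENNReal

theorem abs_toReal_eLpNorm_sub_le {α E : Type*} [MeasurableSpace α] [NormedAddCommGroup E]
    {f g : α → E} {p : ℝ≥0∞} {μ : Measure α} (hf : AEStronglyMeasurable f μ)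
    (hg : AEStronglyMeasurable g μ) (hp : 1 ≤ p) (hf' : eLpNorm f p μ ≠ ⊤)
    (hg' : eLpNorm g p μ ≠ ⊤) :
    |(eLpNorm f p μ).toReal - (eLpNorm g p μ).toReal| ≤ (eLpNorm (f - g) p μ).toReal := by
  have hfg' : eLpNorm (f - g) p μ ≠ ⊤ :=
    ((eLpNorm_sub_le hf hg hp).trans_lt (ENNReal.add_lt_top.2 ⟨hf'.lt_top, hg'.lt_top⟩)).ne
  have hf_le : eLpNorm f p μ ≤ eLpNorm g p μ + eLpNorm (f - g) p μ := by
    simpa using eLpNorm_add_le hg (hf.sub hg) hp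
  have hg_le : eLpNorm g p μ ≤ eLpNorm f p μ + eLpNorm (f - g) p μ := by
    simpa [eLpNorm_sub_comm f g] using eLpNorm_add_le hf (hg.sub hf) hp
  rw [abs_sub_le_iff]
  constructor
  · linarith [ENNReal.toReal_le_add hf_le hg' hfg']
  · linarith [ENNReal.toReal_le_add hg_le hf' hfg']

variable {ι : Type*} [Fintype ι]

theorem lintegral_eq_tsum_setLIntegral_Icc_add_int (G : (ι → ℝ) → ℝ≥0∞) :
    ∫⁻ x, G x = ∑' s : ι → ℤ, ∫⁻ ω in Icc (0 : ι → ℝ) 1, G (ω + fun i => (s i : ℝ)) := by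
  let L := (Submodule.span ℤ (range (Pi.basisFun ℝ ι))).toAddSubgroup
  have hL := (Pi.basisFun ℝ ι).mem_span_iff_repr_mem ℤ
  let e : (ι → ℤ) ≃ L :=
    Equiv.ofBijective (fun s => ⟨fun i => (s i : ℝ), (hL _).2 fun i => by simp⟩)
      ⟨fun s t hst => funext fun i => by simpa using congrFun (congrArg Subtype.val hst) i,
        fun v => by
          choose s hs using (hL _).1 v.2
          exact ⟨s, Subtype.ext <| funext fun i => by simpa using hs i⟩⟩
  have : Countable L := Countable.of_equiv _ e
  have hcube : (univ.pi fun _ : ι => Ico (0 : ℝ) 1) =ᵐ[volume] Icc (0 : ι → ℝ) 1 :=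
    Measure.univ_pi_Ico_ae_eq_Icc
  rw [(ZSpan.isAddFundamentalDomain' (Pi.basisFun ℝ ι) volume).lintegral_eq_tsum'' G,
    ← e.tsum_eq, ZSpan.fundamentalDomain_pi_basisFun, Measure.restrict_congr_set hcube]
  refine tsum_congr fun s => setLIntegral_congr_fun measurableSet_Icc fun ω _ => ?_
  rw [add_comm]
  rfl

variable [DecidableEq ι]

theorem map_mulVec_volume {b : Matrix ι ι ℝ} (hb : b.det ≠ 0) :
    Measure.map (b *ᵥ ·) volume = ENNReal.ofReal |b.det⁻¹| • (volume : Measure (ι → ℝ)) :=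
  Real.map_matrix_volume_pi_eq_smul_volume_pi hb

theorem quasiMeasurePreserving_mulVec {b : Matrix ι ι ℝ} (hb : b.det ≠ 0) :
    Measure.QuasiMeasurePreserving (b *ᵥ ·) volume volume :=
  ⟨(toLin' b).continuous_of_finiteDimensional.measurable,
    (map_mulVec_volume hb).le.absolutelyContinuous.trans Measure.smul_absolutelyContinuous⟩

theorem lintegral_comp_mulVec {b : Matrix ι ι ℝ} (hb : b.det ≠ 0) (G : (ι → ℝ) → ℝ≥0∞) :
    ENNReal.ofReal |b.det| * ∫⁻ x, G (b *ᵥ x) = ∫⁻ y, G y := by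
  let e := ((toLin' b).equivOfDetNeZero (by rwa [LinearMap.det_toLin'])
    ).toContinuousLinearEquiv.toHomeomorph.toMeasurableEquiv
  have hmap : ∫⁻ y, G y ∂Measure.map (b *ᵥ ·) volume = ∫⁻ x, G (b *ᵥ x) :=
    lintegral_map_equiv G e
  rw [← hmap, map_mulVec_volume hb, lintegral_smul_measure, smul_eq_mul, ← mul_assoc,
    ← ENNReal.ofReal_mul (abs_nonneg _), ← abs_mul, mul_inv_cancel₀ hb, abs_one,
    ENNReal.ofReal_one, one_mul]

variable {E : Type*} [NormedAddCommGroup E]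

/-- The Grammian `h_{b,p}(ω)` as an `ℓᵖ` norm over `ℤᵈ`, with values in `ℝ≥0∞`. -/
def gramENorm (p : ℝ≥0∞) (b : Matrix ι ι ℝ) (h : (ι → ℝ) → E) (ω : ι → ℝ) : ℝ≥0∞ :=
  eLpNorm (fun s : ι → ℤ => h (b *ᵥ (ω + fun i => (s i : ℝ)))) p
    (ENNReal.ofReal |b.det| • Measure.count)

theorem gramENorm_rpow {p : ℝ≥0∞} (hp0 : p ≠ 0) (hp : p ≠ ⊤) (b : Matrix ι ι ℝ)
    (h : (ι → ℝ) → E) (ω : ι → ℝ) :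
    gramENorm p b h ω ^ p.toReal =
      ENNReal.ofReal |b.det| * ∑' s : ι → ℤ, ‖h (b *ᵥ (ω + fun i => (s i : ℝ)))‖ₑ ^ p.toReal := by
  rw [gramENorm, eLpNorm_eq_lintegral_rpow_enorm_toReal hp0 hp, ← ENNReal.rpow_mul,
    one_div_mul_cancel (ENNReal.toReal_ne_zero.2 ⟨hp0, hp⟩), ENNReal.rpow_one,
    lintegral_smul_measure, lintegral_count, smul_eq_mul]

/- When the series diverges both sides are `0`: `tsum` of a non-summable family is `0`
and `ENNReal.toReal ⊤ = 0`. -/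
theorem pgram_eq_toReal_gramENorm {d : ℕ} {p : ℝ} (hp : 0 < p) (b : Matrix (Fin d) (Fin d) ℝ)
    (h : (Fin d → ℝ) → ℂ) (ω : Fin d → ℝ) :
    pgram p b h ω = (gramENorm (ENNReal.ofReal p) b h ω).toReal := by
  rw [gramENorm, eLpNorm_eq_lintegral_rpow_enorm_toReal (ENNReal.ofReal_ne_zero_iff.2 hp)
      ENNReal.ofReal_ne_top,
    ENNReal.toReal_ofReal hp.le, lintegral_smul_measure, lintegral_count, smul_eq_mul,
    ← ENNReal.toReal_rpow, ENNReal.toReal_mul, ENNReal.toReal_ofReal (abs_nonneg _),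
    ENNReal.tsum_toReal_eq fun s => ENNReal.rpow_ne_top_of_nonneg hp.le enorm_ne_top]
  simp only [← ENNReal.toReal_rpow, toReal_enorm, pgram]

theorem aemeasurable_enorm_comp_mulVec_add {b : Matrix ι ι ℝ} (hb : b.det ≠ 0)
    {h : (ι → ℝ) → E} (hh : AEStronglyMeasurable h) (c : ι → ℝ) (q : ℝ) :
    AEMeasurable (fun ω => ‖h (b *ᵥ (ω + c))‖ₑ ^ q) :=
  (hh.comp_quasiMeasurePreserving ((quasiMeasurePreserving_mulVec hb).comp
    (measurePreserving_add_right volume c).quasiMeasurePreserving)).enorm.pow_const q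

section

variable {p : ℝ≥0∞} (hp0 : p ≠ 0) (hp : p ≠ ⊤) {b : Matrix ι ι ℝ} (hb : b.det ≠ 0)
  {h : (ι → ℝ) → E}
include hp0 hp hb

theorem aemeasurable_gramENorm_rpow (hh : AEStronglyMeasurable h) :
    AEMeasurable (fun ω => gramENorm p b h ω ^ p.toReal) := by
  simp_rw [gramENorm_rpow hp0 hp]
  exact (AEMeasurable.tsum fun s => aemeasurable_enorm_comp_mulVec_add hb hh _ _).const_mul _

theorem lintegral_gramENorm_rpow (hh : AEStronglyMeasurable h) :
    ∫⁻ ω in Icc 0 1, gramENorm p b h ω ^ p.toReal = ∫⁻ x, ‖h x‖ₑ ^ p.toReal := by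
  simp_rw [gramENorm_rpow hp0 hp]
  rw [lintegral_const_mul' _ _ ENNReal.ofReal_ne_top,
    lintegral_tsum fun s => (aemeasurable_enorm_comp_mulVec_add hb hh _ _).restrict,
    ← lintegral_eq_tsum_setLIntegral_Icc_add_int (fun x => ‖h (b *ᵥ x)‖ₑ ^ p.toReal)]
  exact lintegral_comp_mulVec hb (fun x => ‖h x‖ₑ ^ p.toReal)

theorem eLpNorm_gramENorm (hh : AEStronglyMeasurable h) :
    eLpNorm (gramENorm p b h) p (volume.restrict (Icc 0 1)) = eLpNorm h p volume := by
  simp only [eLpNorm_eq_lintegral_rpow_enorm_toReal hp0 hp, enorm_eq_self,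
    lintegral_gramENorm_rpow hp0 hp hb hh]

theorem ae_gramENorm_lt_top (hh : MemLp h p) :
    ∀ᵐ ω ∂volume.restrict (Icc 0 1), gramENorm p b h ω < ⊤ := by
  have hint : ∫⁻ ω in Icc 0 1, gramENorm p b h ω ^ p.toReal ≠ ⊤ := by
    rw [lintegral_gramENorm_rpow hp0 hp hb hh.1]
    exact (lintegral_rpow_enorm_lt_top_of_eLpNorm_lt_top hp0 hp hh.2).ne
  filter_upwards [ae_lt_top' (aemeasurable_gramENorm_rpow hp0 hp hb hh.1).restrict hint]
    with ω hω
  exact (ENNReal.rpow_lt_top_iff_of_pos (ENNReal.toReal_pos hp0 hp)).1 hω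

end

/-- The p-Grammian is a contraction:
`‖f_{b,p} - g_{b,p}‖_{Lᵖ([0,1]ᵈ)} ≤ ‖f - g‖_{Lᵖ(ℝᵈ)}`. -/
theorem pgram_contraction {d : ℕ} (p : ℝ) (hp : 1 ≤ p) (f g : (Fin d → ℝ) → ℂ)
    (hf : MemLp f (ENNReal.ofReal p) (volume : Measure (Fin d → ℝ)))
    (hg : MemLp g (ENNReal.ofReal p) (volume : Measure (Fin d → ℝ)))
    (b : Matrix (Fin d) (Fin d) ℝ) (hb : IsUnit b) :
    eLpNorm (fun ω => pgram p b f ω - pgram p b g ω) (ENNReal.ofReal p)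
        (volume.restrict (Set.Icc (0 : Fin d → ℝ) 1)) ≤
      eLpNorm (fun x => f x - g x) (ENNReal.ofReal p) (volume : Measure (Fin d → ℝ)) := by
  have hp0 : 0 < p := by linarith
  have hq0 : ENNReal.ofReal p ≠ 0 := ENNReal.ofReal_ne_zero_iff.2 hp0
  have hdet : b.det ≠ 0 := (b.isUnit_iff_isUnit_det.1 hb).ne_zero
  have hpointwise : ∀ᵐ ω ∂volume.restrict (Icc 0 1),
      ‖pgram p b f ω - pgram p b g ω‖ₑ ≤ gramENorm (ENNReal.ofReal p) b (f - g) ω := by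
    filter_upwards [ae_gramENorm_lt_top hq0 ENNReal.ofReal_ne_top hdet hf,
      ae_gramENorm_lt_top hq0 ENNReal.ofReal_ne_top hdet hg] with ω hfω hgω
    rw [pgram_eq_toReal_gramENorm hp0, pgram_eq_toReal_gramENorm hp0, Real.enorm_eq_ofReal_abs]
    exact ENNReal.ofReal_le_of_le_toReal (abs_toReal_eLpNorm_sub_le .of_discrete .of_discrete
      (ENNReal.one_le_ofReal.2 hp) hfω.ne hgω.ne)
  calc _ ≤ eLpNorm (gramENorm (ENNReal.ofReal p) b (f - g)) (ENNReal.ofReal p)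
          (volume.restrict (Icc 0 1)) := eLpNorm_mono_enorm_ae hpointwise
    _ = _ := eLpNorm_gramENorm hq0 ENNReal.ofReal_ne_top hdet (hf.1.sub hg.1)
end
end
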